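/- Let n ≥ 3 and let p₁,…,p_n be integers, and write σ_i = σ_i(p₁,…,p_{i+1}). Let M be the (n−1)×(n−1) symmetric tridiagonal integer matrix with diagonal entries M[i,i] = p_i + p_{i+1} and off-diagonal entries M[i,i+1] = M[i+1,i] = −p_{i+1}, and let B(x,y) = xᵀ M y be the associated symmetric bilinear form on ℤ^{n−1}. Define vectors a₁,…,a_{n−1} ∈ ℤ^{n−1} recursively by a₁ = e₁ and a_{i+1} = σ_i · e_{i+1} + p_{i+1} · a_i for 1 ≤ i ≤ n−2, where e₁,…,e_{n−1} is the standard basis. Then B(a_i, a_j) = 0 for all i ≠ j, and B(a_i, a_i) = σ_{i−1} · σ_i for every 1 ≤ i ≤ n−1. -/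
import Mathlib


open Matrix

/-- `esym p a b j` is the `j`-th elementary symmetric polynomial of the values
`p a, p (a+1), …, p (b-1)`; in the 1-indexed notation of the paper, where `p i`
denotes `p_{i+1}`, this is `σ_j(p_{a+1},…,p_b)`. -/
def esym (p : ℕ → ℤ) (a b j : ℕ) : ℤ :=
  ∑ s ∈ (Finset.Ico a b).powersetCard j, ∏ i ∈ s, p i

/-- The `m × m` symmetric tridiagonal matrix with 1-indexed entries
`M[i,i] = p_i + p_{i+1}`, `M[i,i+1] = M[i+1,i] = -p_{i+1}`. -/
def triM (p : ℕ → ℤ) (m : ℕ) : Matrix (Fin m) (Fin m) ℤ :=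
  Matrix.of fun t u =>
    if (t : ℕ) = (u : ℕ) then p t + p ((t : ℕ) + 1)
    else if (t : ℕ) + 1 = (u : ℕ) then -p u
    else if (u : ℕ) + 1 = (t : ℕ) then -p t
    else 0

lemma esym_zero (p : ℕ → ℤ) (a b : ℕ) : esym p a b 0 = 1 := by
  simp [esym]

lemma esym_self (p : ℕ → ℤ) (b : ℕ) : esym p 0 b b = ∏ i ∈ Finset.Ico 0 b, p i := by
  have h : (Finset.Ico 0 b).card = b := by simp
  rw [esym]
  have h2 : (Finset.Ico 0 b).powersetCard b = {Finset.Ico 0 b} := by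
    ext s
    simp only [Finset.mem_powersetCard, Finset.mem_singleton]
    constructor
    · rintro ⟨hsub, hcard⟩
      exact Finset.eq_of_subset_of_card_le hsub (by simp [hcard])
    · rintro rfl; exact ⟨subset_rfl, by simp⟩
  rw [h2, Finset.sum_singleton]

lemma esym_pascal (p : ℕ → ℤ) (b j : ℕ) :
    esym p 0 (b + 1) (j + 1) = esym p 0 b (j + 1) + p b * esym p 0 b j := by
  have hb : b ∉ Finset.Ico 0 b := by simp
  have h : Finset.Ico 0 (b + 1) = insert b (Finset.Ico 0 b) := by
    ext x; simp; omega
  simp only [esym]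
  rw [h, Finset.powersetCard_succ_insert hb]
  rw [Finset.sum_union]
  · congr 1
    rw [Finset.sum_image]
    · rw [Finset.mul_sum]
      apply Finset.sum_congr rfl
      intro s hs
      have hbs : b ∉ s := fun hc => hb ((Finset.mem_powersetCard.mp hs).1 hc)
      rw [Finset.prod_insert hbs]
    · intro s1 h1 s2 h2 he
      have hb1 : b ∉ s1 := fun hc => hb ((Finset.mem_powersetCard.mp h1).1 hc)
      have hb2 : b ∉ s2 := fun hc => hb ((Finset.mem_powersetCard.mp h2).1 hc)
      have := congrArg (Finset.erase · b) he
      simpa [Finset.erase_insert, hb1, hb2] using this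
  · rw [Finset.disjoint_right]
    intro s hs hs'
    obtain ⟨t, ht, rfl⟩ := Finset.mem_image.mp hs
    have : b ∈ insert b t := Finset.mem_insert_self b t
    exact hb ((Finset.mem_powersetCard.mp hs').1 this)

/-- Explicit formula for the vectors `a t` (as a function of natural indices). -/
def Av (p : ℕ → ℤ) (t u : ℕ) : ℤ :=
  if u ≤ t then (∏ i ∈ Finset.Ico (u + 1) (t + 1), p i) * esym p 0 (u + 1) u else 0

lemma Av_of_gt (p : ℕ → ℤ) {t u : ℕ} (h : t < u) : Av p t u = 0 := by
  simp [Av, Nat.not_le.mpr h]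

lemma Av_of_le (p : ℕ → ℤ) {t u : ℕ} (h : u ≤ t) :
    Av p t u = (∏ i ∈ Finset.Ico (u + 1) (t + 1), p i) * esym p 0 (u + 1) u := by
  simp [Av, h]

lemma Av_self (p : ℕ → ℤ) (t : ℕ) : Av p t t = esym p 0 (t + 1) t := by
  rw [Av_of_le p le_rfl, Finset.Ico_self, Finset.prod_empty, one_mul]

lemma sum_if_eq {m : ℕ} (k : ℕ) (c : Fin m → ℤ) :
    ∑ v : Fin m, (if (v : ℕ) = k then c v else 0) =
      if h : k < m then c ⟨k, h⟩ else 0 := by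
  split_ifs with h
  · rw [Finset.sum_eq_single (⟨k, h⟩ : Fin m)]
    · simp
    · intro b _ hb
      rw [if_neg]
      intro hc
      exact hb (Fin.ext hc)
    · intro hc; exact absurd (Finset.mem_univ _) hc
  · apply Finset.sum_eq_zero
    intro v _
    rw [if_neg]
    intro hc
    exact h (hc ▸ v.isLt)

lemma Ico01 : Finset.Ico 0 1 = {0} := by ext x; simp

lemma prod_top (p : ℕ → ℤ) (b : ℕ) :
    ∏ i ∈ Finset.Ico 0 (b + 1), p i = (∏ i ∈ Finset.Ico 0 b, p i) * p b :=
  Finset.prod_Ico_succ_top (Nat.zero_le b) p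

/-- The key Laplacian computation. -/
lemma laplace (p : ℕ → ℤ) (t u m : ℕ) (ht : t < m) (hu : u < m) :
    (p u + p (u + 1)) * Av p t u + (-p (u + 1)) * Av p t (u + 1)
      + (if 1 ≤ u then (-p u) * Av p t (u - 1) else 0) =
    (if u = t then esym p 0 (t + 2) (t + 1) else 0)
      + (if u = t + 1 then -(p (t + 1) * esym p 0 (t + 1) t) else 0) := by
  rcases Nat.lt_or_ge (t + 1) u with h | h
  · -- u > t + 1 : everything vanishes
    rw [Av_of_gt p (show t < u by omega), Av_of_gt p (show t < u + 1 by omega),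
      Av_of_gt p (show t < u - 1 by omega)]
    split_ifs <;> (first | ring1 | contradiction | (exfalso; omega))
  rcases Nat.eq_or_lt_of_le h with h1 | h1
  · -- u = t + 1
    subst h1
    simp only [Nat.add_sub_cancel]
    rw [Av_of_gt p (show t < t + 1 by omega), Av_of_gt p (show t < t + 1 + 1 by omega),
      Av_self]
    split_ifs <;> (first | ring1 | contradiction | (exfalso; omega))
  rcases Nat.eq_or_lt_of_le (show u ≤ t by omega) with h2 | h2
  · -- u = t
    rcases h2 with rfl
    rw [Av_self, Av_of_gt p (show u < u + 1 by omega),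
      esym_pascal p (u + 1) u, esym_self p (u + 1), prod_top p u]
    rcases u with _ | w
    · -- t = u = 0
      rw [esym_zero]
      simp only [Finset.Ico_self, Finset.prod_empty]
      split_ifs <;> (first | ring1 | contradiction | (exfalso; omega))
    · -- t = u = w + 1
      simp only [Nat.add_sub_cancel]
      rw [Av_of_le p (show w ≤ w + 1 by omega),
        Nat.Ico_succ_singleton,
        Finset.prod_singleton,
        esym_pascal p (w + 1) w, esym_self p (w + 1)]
      split_ifs <;> (first | ring1 | contradiction | (exfalso; omega))
  · -- u < t
    rw [Av_of_le p (show u ≤ t by omega), Av_of_le p (show u + 1 ≤ t by omega),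
      Finset.prod_eq_prod_Ico_succ_bot (show u + 1 < t + 1 by omega) p,
      esym_pascal p (u + 1) u]
    rcases u with _ | w
    · -- u = 0 < t
      rw [esym_zero, esym_self p 1, Ico01, Finset.prod_singleton]
      split_ifs <;> (first | ring1 | contradiction | (exfalso; omega))
    · -- u = w + 1 < t
      simp only [Nat.add_sub_cancel]
      rw [Av_of_le p (show w ≤ t by omega),
        Finset.prod_eq_prod_Ico_succ_bot (show w + 1 < t + 1 by omega) p,
        Finset.prod_eq_prod_Ico_succ_bot (show w + 1 + 1 < t + 1 by omega) p,
        esym_pascal p (w + 1) w, esym_self p (w + 1), esym_self p (w + 1 + 1),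
        prod_top p (w + 1)]
      split_ifs <;> (first | ring1 | contradiction | (exfalso; omega))

lemma sum_if_eq' {m : ℕ} (k : ℕ) (c : ℕ → ℤ) :
    ∑ v : Fin m, (if (v : ℕ) = k then c (v : ℕ) else 0) = if k < m then c k else 0 := by
  split_ifs with h
  · rw [Finset.sum_eq_single (⟨k, h⟩ : Fin m)]
    · simp
    · intro b _ hb
      rw [if_neg]
      intro hc
      exact hb (Fin.ext hc)
    · intro hc; exact absurd (Finset.mem_univ _) hc
  · apply Finset.sum_eq_zero
    intro v _
    rw [if_neg]
    intro hc
    exact h (hc ▸ v.isLt)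

/-- With `a t` denoting the vector `a_{t+1}` of the paper (so `a 0 = a₁ = e₁` and
`a (t+1) = σ_{t+1}·e_{t+2} + p_{t+2}·(a t)` in 1-indexed notation, i.e. the recursion
`a_{i+1} = σ_i·e_{i+1} + p_{i+1}·a_i`), the vectors `a₁,…,a_{n−1}` are orthogonal for
the bilinear form `B(x,y) = xᵀ M y`, with `B(a_i,a_i) = σ_{i−1}·σ_i`. -/
theorem stmt4 (n : ℕ) (hn : 3 ≤ n) (p : ℕ → ℤ)
    (a : ℕ → Fin (n - 1) → ℤ)
    (ha0 : ∀ u : Fin (n - 1), a 0 u = if (u : ℕ) = 0 then 1 else 0)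
    (harec : ∀ t : ℕ, t + 1 ≤ n - 2 → ∀ u : Fin (n - 1),
      a (t + 1) u =
        esym p 0 (t + 2) (t + 1) * (if (u : ℕ) = t + 1 then 1 else 0) + p (t + 1) * a t u) :
    (∀ t u : ℕ, t < n - 1 → u < n - 1 → t ≠ u →
        a t ⬝ᵥ (triM p (n - 1) *ᵥ a u) = 0) ∧
      ∀ t : ℕ, t < n - 1 →
        a t ⬝ᵥ (triM p (n - 1) *ᵥ a t) = esym p 0 (t + 1) t * esym p 0 (t + 2) (t + 1) := by
  -- explicit formula for the vectors
  have hA : ∀ t, t < n - 1 → ∀ u : Fin (n - 1), a t u = Av p t (u : ℕ) := by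
    intro t
    induction t with
    | zero =>
      intro _ u
      rw [ha0]
      rcases Nat.eq_zero_or_pos (u : ℕ) with h | h
      · rw [if_pos h, h, Av_self, esym_zero]
      · rw [if_neg (by omega), Av_of_gt p (by omega)]
    | succ t ih =>
      intro ht u
      rw [harec t (by omega) u, ih (by omega) u]
      rcases Nat.lt_trichotomy (u : ℕ) (t + 1) with h | h | h
      · rw [if_neg (by omega), Av_of_le p (show (u : ℕ) ≤ t by omega),
          Av_of_le p (show (u : ℕ) ≤ t + 1 by omega),
          Finset.prod_Ico_succ_top (show (u : ℕ) + 1 ≤ t + 1 by omega)]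
        ring
      · rw [if_pos h, h, Av_self, Av_of_gt p (show t < t + 1 by omega)]
        ring
      · rw [if_neg (by omega), Av_of_gt p (show t < (u : ℕ) by omega),
          Av_of_gt p (show t + 1 < (u : ℕ) by omega)]
        ring
  -- the matrix applied to a vector
  have key : ∀ t, t < n - 1 → ∀ u : Fin (n - 1),
      (triM p (n - 1) *ᵥ a t) u =
        (if (u : ℕ) = t then esym p 0 (t + 2) (t + 1) else 0)
        + (if (u : ℕ) = t + 1 then -(p (t + 1) * esym p 0 (t + 1) t) else 0) := by
    intro t ht u
    have expand : (triM p (n - 1) *ᵥ a t) u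
        = ∑ v : Fin (n - 1), triM p (n - 1) u v * Av p t (v : ℕ) := by
      simp only [Matrix.mulVec, dotProduct]
      exact Finset.sum_congr rfl fun v _ => by rw [hA t ht v]
    have hsplit : ∀ v : Fin (n - 1), triM p (n - 1) u v * Av p t (v : ℕ) =
        (if (v : ℕ) = (u : ℕ) then (p (v : ℕ) + p ((v : ℕ) + 1)) * Av p t (v : ℕ) else 0)
        + (if (v : ℕ) = (u : ℕ) + 1 then (-p (v : ℕ)) * Av p t (v : ℕ) else 0)
        + (if (v : ℕ) = (if 1 ≤ (u : ℕ) then (u : ℕ) - 1 else n - 1)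
            then (-p (u : ℕ)) * Av p t (v : ℕ) else 0) := by
      intro v
      simp only [triM, Matrix.of_apply]
      split_ifs <;>
        (first | ring1 | (exfalso; omega) | (simp_all; try ring1) | (exfalso; omega))
    rw [expand, Finset.sum_congr rfl fun v _ => hsplit v, Finset.sum_add_distrib,
      Finset.sum_add_distrib, sum_if_eq' (u : ℕ) (fun w => (p w + p (w + 1)) * Av p t w),
      sum_if_eq' ((u : ℕ) + 1) (fun w => (-p w) * Av p t w),
      sum_if_eq' _ (fun w => (-p (u : ℕ)) * Av p t w)]
    rw [if_pos u.isLt]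
    have L := laplace p t (u : ℕ) (n - 1) ht u.isLt
    rw [← L]
    congr 1
    · congr 1
      by_cases hc : (u : ℕ) + 1 < n - 1
      · rw [if_pos hc]
      · rw [if_neg hc, Av_of_gt p (show t < (u : ℕ) + 1 by omega)]
        ring
    · by_cases h1 : 1 ≤ (u : ℕ)
      · rw [if_pos h1, if_pos h1, if_pos (show (u : ℕ) - 1 < n - 1 by omega)]
      · rw [if_neg h1, if_neg h1, if_neg (show ¬ (n - 1 < n - 1) by omega)]
  -- the bilinear form values
  have hdot : ∀ t u : ℕ, t < n - 1 → u < n - 1 →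
      a t ⬝ᵥ (triM p (n - 1) *ᵥ a u) =
        Av p t u * esym p 0 (u + 2) (u + 1)
          - Av p t (u + 1) * (p (u + 1) * esym p 0 (u + 1) u) := by
    intro t u ht hu
    have hterm : ∀ v : Fin (n - 1), a t v * (triM p (n - 1) *ᵥ a u) v =
        (if (v : ℕ) = u then Av p t (v : ℕ) * esym p 0 (u + 2) (u + 1) else 0)
        + (if (v : ℕ) = u + 1
            then Av p t (v : ℕ) * (-(p (u + 1) * esym p 0 (u + 1) u)) else 0) := by
      intro v
      rw [key u hu v, hA t ht v]
      split_ifs <;> (first | ring1 | (exfalso; omega))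
    rw [dotProduct, Finset.sum_congr rfl fun v _ => hterm v, Finset.sum_add_distrib,
      sum_if_eq' u (fun w => Av p t w * esym p 0 (u + 2) (u + 1)),
      sum_if_eq' (u + 1) (fun w => Av p t w * (-(p (u + 1) * esym p 0 (u + 1) u)))]
    rw [if_pos hu]
    by_cases hc : u + 1 < n - 1
    · rw [if_pos hc]; ring
    · rw [if_neg hc, Av_of_gt p (show t < u + 1 by omega)]; ring
  constructor
  · intro t u ht hu htu
    rw [hdot t u ht hu]
    rcases Nat.lt_or_ge t u with h | h
    · rw [Av_of_gt p h, Av_of_gt p (show t < u + 1 by omega)]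
      ring
    · have h2 : u < t := by omega
      rw [Av_of_le p (show u ≤ t by omega), Av_of_le p (show u + 1 ≤ t by omega),
        Finset.prod_eq_prod_Ico_succ_bot (show u + 1 < t + 1 by omega) p,
        esym_pascal p (u + 1) u]
      ring
  · intro t ht
    rw [hdot t t ht ht, Av_self, Av_of_gt p (show t < t + 1 by omega)]
    ring
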